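/- arXiv:1202.0298 — 3 statements merged into one kernel-verified Lean document; each statement's English description precedes it below -/
import Mathlib

section
/- For every a > 0 and b > 0, the function f(x) = Γ(a, b·x^(1/a)) is convex on the interval (0, ∞). -/
open Real Set MeasureTheory

/-- The upper incomplete gamma function `Γ(s, x) = ∫_x^∞ t^(s-1) e^(-t) dt`. -/
noncomputable def upperIncompleteGamma (s x : ℝ) : ℝ :=
  ∫ t in Set.Ioi x, t ^ (s - 1) * Real.exp (-t)

/-!
By the fundamental theorem of calculus `∂ₓ Γ(a, x) = -x^(a-1) e^(-x)`, so by the chain rule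
the derivative of `x ↦ Γ(a, b x^(1/a))` is `-(b^a / a) e^(-b x^(1/a))`: the powers of `x`
cancel exactly. This derivative is increasing in `x`, hence the function is convex.
-/

theorem hasDerivAt_integral_Ioi {E : Type*} [NormedAddCommGroup E] [NormedSpace ℝ E]
    [CompleteSpace E] {f : ℝ → E} {a x : ℝ} (hf : IntegrableOn f (Ioi a)) (hax : a < x)
    (hfx : ContinuousAt f x) :
    HasDerivAt (fun u => ∫ t in Ioi u, f t) (-f x) x := by
  have hsplit : ∀ᶠ u in nhds x,
      (∫ t in Ioi a, f t) - ∫ t in a..u, f t = ∫ t in Ioi u, f t := by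
    filter_upwards [Ioi_mem_nhds hax] with u hu
    rw [← intervalIntegral.integral_Ioi_sub_Ioi hf (le_of_lt hu), sub_sub_cancel]
  have hint : IntervalIntegrable f volume a x :=
    (intervalIntegrable_iff_integrableOn_Ioc_of_le hax.le).2 (hf.mono_set Ioc_subset_Ioi_self)
  have hmeas : StronglyMeasurableAtFilter f (nhds x) volume :=
    ⟨Ioi a, Ioi_mem_nhds hax, hf.aestronglyMeasurable⟩
  simpa using ((intervalIntegral.integral_hasDerivAt_right hint hmeas hfx).const_sub
    (∫ t in Ioi a, f t)).congr_of_eventuallyEq (Filter.EventuallyEq.symm hsplit)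

theorem integrableOn_rpow_mul_exp_neg_Ioi (s : ℝ) {c : ℝ} (hc : 0 < c) :
    IntegrableOn (fun t => t ^ s * exp (-t)) (Ioi c) := by
  have hcont : ContinuousOn (fun t : ℝ => t ^ s * exp (-t)) (Ici c) := fun t ht =>
    ((continuousAt_rpow_const t s (Or.inl (hc.trans_le ht).ne')).mul
      (continuous_exp.comp continuous_neg).continuousAt).continuousWithinAt
  refine integrable_of_isBigO_exp_neg one_half_pos hcont ?_
  simpa only [mul_comm (exp _)] using (Gamma_integrand_isLittleO s).isBigO

theorem hasDerivAt_upperIncompleteGamma (s : ℝ) {x : ℝ} (hx : 0 < x) :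
    HasDerivAt (upperIncompleteGamma s) (-(x ^ (s - 1) * exp (-x))) x :=
  hasDerivAt_integral_Ioi (integrableOn_rpow_mul_exp_neg_Ioi (s - 1) (half_pos hx))
    (half_lt_self hx)
    ((continuousAt_rpow_const x (s - 1) (Or.inl hx.ne')).mul
      (continuous_exp.comp continuous_neg).continuousAt)

theorem hasDerivAt_upperIncompleteGamma_comp_rpow {a b x : ℝ} (ha : a ≠ 0) (hb : 0 < b)
    (hx : 0 < x) :
    HasDerivAt (fun x : ℝ => upperIncompleteGamma a (b * x ^ (1 / a)))
      (-(b ^ a / a) * exp (-(b * x ^ (1 / a)))) x := by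
  have hinner : HasDerivAt (fun x : ℝ => b * x ^ (1 / a)) (b * (1 / a * x ^ (1 / a - 1))) x :=
    (hasDerivAt_rpow_const (Or.inl hx.ne')).const_mul b
  refine ((hasDerivAt_upperIncompleteGamma a (by positivity)).comp x hinner).congr_deriv ?_
  have hxpow : x ^ (1 / a * (a - 1)) * x ^ (1 / a - 1) = 1 := by
    rw [← rpow_add hx, show 1 / a * (a - 1) + (1 / a - 1) = 0 by field_simp; ring, rpow_zero]
  have hbpow : b ^ (a - 1) * b = b ^ a := by
    rw [← rpow_add_one hb.ne', sub_add_cancel]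
  calc -((b * x ^ (1 / a)) ^ (a - 1) * exp (-(b * x ^ (1 / a)))) * (b * (1 / a * x ^ (1 / a - 1)))
      = -((b ^ (a - 1) * b) * (x ^ (1 / a * (a - 1)) * x ^ (1 / a - 1)) / a)
          * exp (-(b * x ^ (1 / a))) := by
        rw [mul_rpow hb.le (rpow_nonneg hx.le _), ← rpow_mul hx.le]; ring
    _ = -(b ^ a / a) * exp (-(b * x ^ (1 / a))) := by rw [hbpow, hxpow, mul_one]

theorem convexOn_of_hasDerivAt_of_monotoneOn {D : Set ℝ} (hD : Convex ℝ D) (hDo : IsOpen D)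
    {f f' : ℝ → ℝ} (hf : ∀ x ∈ D, HasDerivAt f (f' x) x) (hf' : MonotoneOn f' D) :
    ConvexOn ℝ D f := by
  have hdiff : DifferentiableOn ℝ f D := fun x hx =>
    (hf x hx).differentiableAt.differentiableWithinAt
  have hderiv : MonotoneOn (deriv f) D := hf'.congr fun x hx => ((hf x hx).deriv).symm
  refine MonotoneOn.convexOn_of_deriv hD hdiff.continuousOn ?_ ?_ <;> rwa [hDo.interior_eq]

/-- For `a > 0` and `b > 0`, the function `x ↦ Γ(a, b·x^(1/a))` is convex on `(0, ∞)`. -/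
theorem convexOn_upperIncompleteGamma_comp_rpow (a b : ℝ) (ha : 0 < a) (hb : 0 < b) :
    ConvexOn ℝ (Set.Ioi (0 : ℝ))
      (fun x : ℝ => upperIncompleteGamma a (b * x ^ (1 / a))) := by
  refine convexOn_of_hasDerivAt_of_monotoneOn (convex_Ioi 0) isOpen_Ioi
    (fun x hx => hasDerivAt_upperIncompleteGamma_comp_rpow ha.ne' hb hx) ?_
  intro x hx y _ hxy
  have hpow : x ^ (1 / a) ≤ y ^ (1 / a) := rpow_le_rpow (le_of_lt hx) hxy (by positivity)
  have hexp : exp (-(b * y ^ (1 / a))) ≤ exp (-(b * x ^ (1 / a))) :=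
    exp_le_exp.2 (neg_le_neg (mul_le_mul_of_nonneg_left hpow hb.le))
  exact mul_le_mul_of_nonpos_left hexp (neg_nonpos.2 (by positivity))
end

section
/- Let k ≥ 1, σ > 0, and let μ be the measure on ℝ^k with density z ↦ (2πσ²)^(−k/2)·exp(−‖z‖²/(2σ²)) with respect to Lebesgue measure. For every Lebesgue-measurable set S ⊆ ℝ^k and every R ≥ 0 such that the Lebesgue volume of S is at most the Lebesgue volume of the closed ball of radius R centered at the origin, one has μ(S) ≤ μ(closed ball of radius R centered at the origin). -/
/-!
Bathtub principle: if the density is at least `c` on `t` and at most `c` off `t`, then trading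
the part of `s` outside `t` for an (at least as large) part of `t \ s` can only increase the
weighted measure. The Gaussian density is a decreasing function of `‖z‖`, so the closed ball of
radius `R` is such a superlevel set, with `c` the density on its boundary sphere.
-/

open MeasureTheory Real Set ENNReal

theorem withDensity_apply_le_of_measure_le {α : Type*} [MeasurableSpace α] {μ : Measure α}
    {f : α → ℝ≥0∞} {s t : Set α} (c : ℝ≥0∞) (hs : MeasurableSet s) (ht : MeasurableSet t)
    (ht_fin : μ t ≠ ∞) (hst : μ s ≤ μ t) (hf_in : ∀ x ∈ t, c ≤ f x)
    (hf_out : ∀ x ∉ t, f x ≤ c) :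
    μ.withDensity f s ≤ μ.withDensity f t := by
  have hdiff : μ (s \ t) ≤ μ (t \ s) := by
    have hfin : μ (s ∩ t) ≠ ∞ := measure_ne_top_of_subset inter_subset_right ht_fin
    rwa [← ENNReal.add_le_add_iff_left hfin, measure_inter_add_sdiff s ht, inter_comm,
      measure_inter_add_sdiff t hs]
  have hout : μ.withDensity f (s \ t) ≤ c * μ (s \ t) := by
    rw [withDensity_apply _ (hs.diff ht), ← setLIntegral_const]
    exact setLIntegral_mono' (hs.diff ht) fun x hx => hf_out x hx.2
  have hin : c * μ (t \ s) ≤ μ.withDensity f (t \ s) := by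
    rw [withDensity_apply _ (ht.diff hs), ← setLIntegral_const]
    exact setLIntegral_mono' (ht.diff hs) fun x hx => hf_in x hx.1
  have hswap : μ.withDensity f (s \ t) ≤ μ.withDensity f (t \ s) :=
    hout.trans ((mul_le_mul_right hdiff c).trans hin)
  calc μ.withDensity f s = μ.withDensity f (t ∩ s) + μ.withDensity f (s \ t) := by
        rw [inter_comm, measure_inter_add_sdiff s ht]
    _ ≤ μ.withDensity f (t ∩ s) + μ.withDensity f (t \ s) := add_le_add_right hswap _
    _ = μ.withDensity f t := measure_inter_add_sdiff t hs

theorem ofReal_mul_exp_neg_sq_div_le {a b x y : ℝ} (ha : 0 ≤ a) (hb : 0 ≤ b) (hx : 0 ≤ x)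
    (hxy : x ≤ y) :
    ENNReal.ofReal (a * exp (-y ^ 2 / b)) ≤ ENNReal.ofReal (a * exp (-x ^ 2 / b)) := by
  gcongr

theorem gaussian_measure_le_of_volume_le_general (k : ℕ) (σ : ℝ)
    (S : Set (EuclideanSpace ℝ (Fin k))) (hS : MeasurableSet S) (R : ℝ) (hR : 0 ≤ R)
    (hvol : volume S ≤ volume (Metric.closedBall (0 : EuclideanSpace ℝ (Fin k)) R)) :
    (volume.withDensity fun z : EuclideanSpace ℝ (Fin k) =>
        ENNReal.ofReal ((2 * π * σ ^ 2) ^ (-(k : ℝ) / 2) *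
          Real.exp (-‖z‖ ^ 2 / (2 * σ ^ 2)))) S ≤
      (volume.withDensity fun z : EuclideanSpace ℝ (Fin k) =>
        ENNReal.ofReal ((2 * π * σ ^ 2) ^ (-(k : ℝ) / 2) *
          Real.exp (-‖z‖ ^ 2 / (2 * σ ^ 2))))
        (Metric.closedBall (0 : EuclideanSpace ℝ (Fin k)) R) := by
  have ha : 0 ≤ (2 * π * σ ^ 2) ^ (-(k : ℝ) / 2) := by positivity
  have hb : 0 ≤ 2 * σ ^ 2 := by positivity
  refine withDensity_apply_le_of_measure_le
    (ENNReal.ofReal ((2 * π * σ ^ 2) ^ (-(k : ℝ) / 2) * exp (-R ^ 2 / (2 * σ ^ 2))))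
    hS measurableSet_closedBall measure_closedBall_lt_top.ne hvol (fun z hz => ?_)
    (fun z hz => ?_)
  · exact ofReal_mul_exp_neg_sq_div_le ha hb (norm_nonneg z) (mem_closedBall_zero_iff.1 hz)
  · exact ofReal_mul_exp_neg_sq_div_le ha hb hR (not_le.1 (mt mem_closedBall_zero_iff.2 hz)).le

/-- Among measurable sets whose Lebesgue volume does not exceed that of the centered
closed ball of radius `R`, the centered Gaussian measure (with density
`z ↦ (2πσ²)^(−k/2)·exp(−‖z‖²/(2σ²))`) of the set is at most that of the ball. -/
theorem gaussian_measure_le_of_volume_le (k : ℕ) (hk : 1 ≤ k) (σ : ℝ) (hσ : 0 < σ)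
    (S : Set (EuclideanSpace ℝ (Fin k))) (hS : MeasurableSet S) (R : ℝ) (hR : 0 ≤ R)
    (hvol : volume S ≤ volume (Metric.closedBall (0 : EuclideanSpace ℝ (Fin k)) R)) :
    (volume.withDensity fun z : EuclideanSpace ℝ (Fin k) =>
        ENNReal.ofReal ((2 * π * σ ^ 2) ^ (-(k : ℝ) / 2) *
          Real.exp (-‖z‖ ^ 2 / (2 * σ ^ 2)))) S ≤
      (volume.withDensity fun z : EuclideanSpace ℝ (Fin k) =>
        ENNReal.ofReal ((2 * π * σ ^ 2) ^ (-(k : ℝ) / 2) *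
          Real.exp (-‖z‖ ^ 2 / (2 * σ ^ 2))))
        (Metric.closedBall (0 : EuclideanSpace ℝ (Fin k)) R) :=
  gaussian_measure_le_of_volume_le_general k σ S hS R hR hvol
end

section
/- Let v_1, …, v_N be vectors in ℝ^N, let h_1, …, h_N be nonnegative real numbers, let H = diag(h_1, …, h_N), let 1 ≤ k ≤ N, and set W = (‖v_1‖ + ⋯ + ‖v_N‖)/N. Then ∑_{S ⊆ {1,…,N}, |S| = k} √det(G_S) ≤ (max_{j=1,…,N} h_j)^k · C(N,k) · W^k, where for each k-element subset S, G_S is the k×k Gram matrix of the vectors (H v_i)_{i ∈ S} and C(N,k) is the binomial coefficient. -/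
open Finset

/-- The Euclidean norm on `Fin N → ℝ`. -/
noncomputable def euclNorm {N : ℕ} (v : Fin N → ℝ) : ℝ :=
  Real.sqrt (∑ i, v i ^ 2)

/-!
Each summand is the volume of the parallelotope spanned by the faded vectors `H v_i`, `i ∈ S`,
so by Hadamard's inequality it is at most `∏_{i ∈ S} ‖H v_i‖ ≤ (max_j h_j)^k ∏_{i ∈ S} ‖v_i‖`.
Summing over `S` leaves `(max_j h_j)^k` times the `k`-th elementary symmetric function `e_k` of
the norms, and Maclaurin's inequality `N^k e_k ≤ C(N,k) e_1^k` finishes.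

Hadamard's inequality comes from Gram–Schmidt: in an orthonormal basis `b` adapted to the
vectors `u_i` their coordinate matrix is triangular, so the Gram determinant is
`∏ ⟪b_i, u_i⟫² ≤ ∏ ‖u_i‖²`. Maclaurin's inequality follows by induction from
`(k+1) N e_{k+1} ≤ (N-k) e_1 e_k`; double counting reduces this to Cauchy–Schwarz
`(∑_A x)² ≤ |A| ∑_A x²` on the complements `A` of the `(k-1)`-element sets.
-/

open Matrix
open scoped InnerProductSpace

section Hadamard
variable {ι E : Type*} [Fintype ι] [DecidableEq ι] [NormedAddCommGroup E] [InnerProductSpace ℝ E]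

theorem det_gram_le_prod_norm_sq_of_finrank_eq [LinearOrder ι] [LocallyFiniteOrderBot ι]
    [FiniteDimensional ℝ E] (hE : Module.finrank ℝ E = Fintype.card ι) (u : ι → E) :
    (gram ℝ u).det ≤ ∏ i, ‖u i‖ ^ 2 := by
  set b := InnerProductSpace.gramSchmidtOrthonormalBasis hE u
  have hdet : (gram ℝ u).det = ∏ i, ⟪b i, u i⟫_ℝ ^ 2 := by
    rw [gram_eq_conjTranspose_mul b, det_mul, det_conjTranspose, star_trivial, ← sq, prod_pow,
      ← InnerProductSpace.gramSchmidtOrthonormalBasis_det, Module.Basis.det_apply]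
    rfl
  rw [hdet]
  refine prod_le_prod (fun i _ => sq_nonneg _) fun i _ => ?_
  calc ⟪b i, u i⟫_ℝ ^ 2 = |⟪b i, u i⟫_ℝ| ^ 2 := (sq_abs _).symm
    _ ≤ (‖b i‖ * ‖u i‖) ^ 2 := by gcongr; exact abs_real_inner_le_norm _ _
    _ = ‖u i‖ ^ 2 := by rw [b.orthonormal.1 i, one_mul]

theorem det_gram_le_prod_norm_sq (u : ι → E) : (gram ℝ u).det ≤ ∏ i, ‖u i‖ ^ 2 := by
  by_cases hu : LinearIndependent ℝ u
  swap
  · rw [← det_gram_ne_zero_iff_linearIndependent (𝕜 := ℝ), not_not] at hu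
    rw [hu]
    positivity
  let e := Fintype.equivFin ι
  let F := Submodule.span ℝ (Set.range u)
  let w : Fin (Fintype.card ι) → F := fun j => ⟨u (e.symm j), Submodule.subset_span ⟨_, rfl⟩⟩
  have : FiniteDimensional ℝ F := .span_of_finite ℝ (Set.finite_range u)
  have hF : Module.finrank ℝ F = Fintype.card (Fin (Fintype.card ι)) := by
    rw [finrank_span_eq_card hu, Fintype.card_fin]
  have hgram : gram ℝ w = (gram ℝ u).submatrix e.symm e.symm := rfl
  calc (gram ℝ u).det = (gram ℝ w).det := by rw [hgram, det_submatrix_equiv_self]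
    _ ≤ ∏ j, ‖w j‖ ^ 2 := det_gram_le_prod_norm_sq_of_finrank_eq hF w
    _ = ∏ i, ‖u i‖ ^ 2 := e.symm.prod_comp fun i => ‖u i‖ ^ 2

end Hadamard

theorem euclNorm_eq_norm_toLp {n : ℕ} (x : Fin n → ℝ) :
    euclNorm x = ‖WithLp.toLp 2 x‖ := by
  simp [euclNorm, EuclideanSpace.norm_eq]

theorem euclNorm_diagonal_mulVec_le {n : ℕ} {h : Fin n → ℝ} {M : ℝ} (hM0 : 0 ≤ M)
    (hM : ∀ j, |h j| ≤ M) (w : Fin n → ℝ) :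
    euclNorm (diagonal h *ᵥ w) ≤ M * euclNorm w := by
  rw [euclNorm, euclNorm, ← Real.sqrt_sq hM0, ← Real.sqrt_mul (sq_nonneg M), mul_sum]
  gcongr with j
  rw [mulVec_diagonal, mul_pow, ← sq_abs (h j)]
  gcongr
  exact hM j

theorem sqrt_det_gram_le_prod_euclNorm {ι : Type*} [Fintype ι] [DecidableEq ι] {n : ℕ}
    (u : ι → Fin n → ℝ) :
    Real.sqrt (Matrix.of fun i l : ι => ∑ j, u i j * u l j).det ≤ ∏ i, euclNorm (u i) := by
  have hgram : (Matrix.of fun i l : ι => ∑ j, u i j * u l j) =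
      gram ℝ fun i => (WithLp.toLp 2 (u i) : EuclideanSpace ℝ (Fin n)) := by
    ext i l
    simp [PiLp.inner_apply, mul_comm]
  simp_rw [hgram, euclNorm_eq_norm_toLp]
  calc Real.sqrt (gram ℝ fun i => (WithLp.toLp 2 (u i) : EuclideanSpace ℝ (Fin n))).det
      ≤ Real.sqrt ((∏ i, ‖WithLp.toLp 2 (u i)‖) ^ 2) := by
        rw [← prod_pow]
        exact Real.sqrt_le_sqrt (det_gram_le_prod_norm_sq _)
    _ = ∏ i, ‖WithLp.toLp 2 (u i)‖ := Real.sqrt_sq (by positivity)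

theorem sqrt_det_gram_diagonal_mulVec_le {n : ℕ} {h : Fin n → ℝ} {M : ℝ} (hM0 : 0 ≤ M)
    (hM : ∀ j, |h j| ≤ M) (v : Fin n → Fin n → ℝ) (S : Finset (Fin n)) :
    Real.sqrt (Matrix.of fun i l : S => ∑ j, (diagonal h *ᵥ v i) j * (diagonal h *ᵥ v l) j).det ≤
      M ^ #S * ∏ i ∈ S, euclNorm (v i) :=
  calc _ ≤ ∏ i : S, euclNorm (diagonal h *ᵥ v i) := sqrt_det_gram_le_prod_euclNorm _
    _ = ∏ i ∈ S, euclNorm (diagonal h *ᵥ v i) :=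
        prod_coe_sort S fun i => euclNorm (diagonal h *ᵥ v i)
    _ ≤ ∏ i ∈ S, M * euclNorm (v i) :=
        prod_le_prod (fun i _ => Real.sqrt_nonneg _)
          fun i _ => euclNorm_diagonal_mulVec_le hM0 hM (v i)
    _ = M ^ #S * ∏ i ∈ S, euclNorm (v i) := by rw [prod_mul_distrib, prod_const]

section Combinatorics
variable {α R : Type*} [Fintype α]

theorem sum_powersetCard_prod_mul_card [CommSemiring R] (x : α → R) (k : ℕ) (c : Finset α → R) :
    ∑ T ∈ powersetCard k univ, (∏ i ∈ T, x i) * ∑ _i ∈ T, c T =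
      k * ∑ T ∈ powersetCard k univ, (∏ i ∈ T, x i) * c T := by
  rw [mul_sum]
  refine sum_congr rfl fun T hT => ?_
  rw [sum_const, mem_powersetCard_univ.1 hT, nsmul_eq_mul]
  ring

variable [DecidableEq α]

theorem sum_powersetCard_succ_sum_mem [AddCommMonoid R] (t : ℕ) (g : Finset α → α → R) :
    ∑ T ∈ powersetCard (t + 1) univ, ∑ i ∈ T, g T i =
      ∑ U ∈ powersetCard t univ, ∑ i ∈ Uᶜ, g (insert i U) i := by
  rw [sum_sigma', sum_sigma']
  refine sum_nbij' (fun p => ⟨p.1.erase p.2, p.2⟩) (fun p => ⟨insert p.2 p.1, p.2⟩)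
    ?_ ?_ ?_ ?_ ?_
  · rintro ⟨T, i⟩ hp
    rw [mem_sigma, mem_powersetCard_univ] at hp ⊢
    simp [card_erase_of_mem hp.2, hp.1]
  · rintro ⟨U, i⟩ hp
    rw [mem_sigma, mem_powersetCard_univ, mem_compl] at hp
    simp [card_insert_of_notMem hp.2, hp.1]
  · rintro ⟨T, i⟩ hp
    simp [insert_erase (mem_sigma.1 hp).2]
  · rintro ⟨U, i⟩ hp
    simp [erase_insert (mem_compl.1 (mem_sigma.1 hp).2)]
  · rintro ⟨T, i⟩ hp
    simp [insert_erase (mem_sigma.1 hp).2]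

theorem sum_powersetCard_succ_prod_mul_sum [CommSemiring R] (x : α → R) (t : ℕ)
    (c : Finset α → α → R) :
    ∑ T ∈ powersetCard (t + 1) univ, (∏ i ∈ T, x i) * ∑ i ∈ T, c T i =
      ∑ U ∈ powersetCard t univ, (∏ i ∈ U, x i) * ∑ i ∈ Uᶜ, x i * c (insert i U) i := by
  simp_rw [mul_sum]
  rw [sum_powersetCard_succ_sum_mem]
  refine sum_congr rfl fun U _ => sum_congr rfl fun i hi => ?_
  rw [prod_insert (mem_compl.1 hi)]
  ring

theorem succ_mul_esymm_succ [CommSemiring R] (x : α → R) (t : ℕ) :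
    ((t : R) + 1) * (univ.val.map x).esymm (t + 1) =
      ∑ U ∈ powersetCard t univ, (∏ i ∈ U, x i) * ∑ i ∈ Uᶜ, x i := by
  have h := sum_powersetCard_succ_prod_mul_sum x t fun _ _ => 1
  rw [sum_powersetCard_prod_mul_card x (t + 1) fun _ => 1] at h
  simpa [esymm_map_val] using h

theorem sum_mul_esymm [CommSemiring R] (x : α → R) (k : ℕ) :
    (∑ i, x i) * (univ.val.map x).esymm k =
      ((k : R) + 1) * (univ.val.map x).esymm (k + 1) +
        ∑ T ∈ powersetCard k univ, (∏ i ∈ T, x i) * ∑ i ∈ T, x i := by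
  rw [succ_mul_esymm_succ, esymm_map_val, mul_sum, ← sum_add_distrib]
  refine sum_congr rfl fun T _ => ?_
  rw [← sum_add_sum_compl T x]
  ring

end Combinatorics

theorem sum_mul_sum_erase_le {α : Type*} [DecidableEq α] (s : Finset α) (x : α → ℝ) :
    ∑ i ∈ s, x i * ∑ j ∈ s.erase i, x j ≤ (#s - 1) * ∑ i ∈ s, x i * x i := by
  have hsum : ∑ i ∈ s, x i * ∑ j ∈ s.erase i, x j = (∑ i ∈ s, x i) ^ 2 - ∑ i ∈ s, x i * x i := by
    rw [sq, sum_mul, ← sum_sub_distrib]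
    refine sum_congr rfl fun i hi => ?_
    rw [sum_erase_eq_sub hi]
    ring
  have hcauchy := sq_sum_le_card_mul_sum_sq (s := s) (f := x)
  simp only [sq] at hcauchy
  rw [hsum]
  linarith

section Maclaurin
variable {α : Type*} [Fintype α] [DecidableEq α] {x : α → ℝ}

theorem mul_succ_mul_esymm_succ_le (hx : ∀ i, 0 ≤ x i) (k : ℕ) :
    (k : ℝ) * (k + 1) * (univ.val.map x).esymm (k + 1) ≤
      (Fintype.card α - k) * ∑ T ∈ powersetCard k univ, (∏ i ∈ T, x i) * ∑ i ∈ T, x i := by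
  cases k with
  | zero => simp
  | succ t =>
    have hlhs : ((t + 1 : ℕ) : ℝ) * ((t + 1 : ℕ) + 1) * (univ.val.map x).esymm (t + 1 + 1) =
        ∑ V ∈ powersetCard t univ,
          (∏ i ∈ V, x i) * ∑ i ∈ Vᶜ, x i * ∑ j ∈ Vᶜ.erase i, x j := by
      rw [mul_assoc, succ_mul_esymm_succ, ← sum_powersetCard_prod_mul_card,
        sum_powersetCard_succ_prod_mul_sum]
      simp_rw [compl_insert]
    rw [hlhs, sum_powersetCard_succ_prod_mul_sum x t fun _ i => x i, mul_sum]
    refine sum_le_sum fun V hV => ?_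
    have hcard : (#Vᶜ : ℝ) = Fintype.card α - t := by
      have hVt := mem_powersetCard_univ.1 hV
      rw [card_compl, hVt, Nat.cast_sub (hVt ▸ card_le_univ V)]
    calc (∏ i ∈ V, x i) * ∑ i ∈ Vᶜ, x i * ∑ j ∈ Vᶜ.erase i, x j
        ≤ (∏ i ∈ V, x i) * ((#Vᶜ - 1) * ∑ i ∈ Vᶜ, x i * x i) := by
          gcongr
          · exact prod_nonneg fun i _ => hx i
          · exact sum_mul_sum_erase_le _ x
      _ = _ := by rw [hcard]; push_cast; ring

theorem succ_mul_card_mul_esymm_succ_le (hx : ∀ i, 0 ≤ x i) (k : ℕ) :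
    ((k : ℝ) + 1) * Fintype.card α * (univ.val.map x).esymm (k + 1) ≤
      (Fintype.card α - k) * (∑ i, x i) * (univ.val.map x).esymm k := by
  rw [mul_assoc _ (∑ i, x i), sum_mul_esymm]
  linear_combination mul_succ_mul_esymm_succ_le hx k

theorem card_pow_mul_esymm_le (hx : ∀ i, 0 ≤ x i) (k : ℕ) :
    (Fintype.card α : ℝ) ^ k * (univ.val.map x).esymm k ≤
      (Fintype.card α).choose k * (∑ i, x i) ^ k := by
  set n := Fintype.card α
  have hS : 0 ≤ ∑ i, x i := sum_nonneg fun i _ => hx i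
  induction k with
  | zero => simp [Multiset.esymm]
  | succ k ih =>
    rcases le_or_gt n k with hnk | hkn
    · have : (univ.val.map x).esymm (k + 1) = 0 := by
        rw [esymm_map_val, powersetCard_eq_empty.2 (by simp [n] at hnk ⊢; omega), sum_empty]
      rw [this, mul_zero]
      positivity
    have hchoose : ((n : ℝ) - k) * n.choose k = (k + 1) * n.choose (k + 1) := by
      rw [← Nat.cast_sub hkn.le]
      norm_cast
      rw [mul_comm, ← Nat.choose_succ_right_eq, mul_comm]
    refine le_of_mul_le_mul_left ?_ (by positivity : (0 : ℝ) < k + 1)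
    calc ((k : ℝ) + 1) * ((n : ℝ) ^ (k + 1) * (univ.val.map x).esymm (k + 1))
        = (n : ℝ) ^ k * (((k : ℝ) + 1) * n * (univ.val.map x).esymm (k + 1)) := by ring
      _ ≤ (n : ℝ) ^ k * ((n - k) * (∑ i, x i) * (univ.val.map x).esymm k) :=
          mul_le_mul_of_nonneg_left (succ_mul_card_mul_esymm_succ_le hx k) (by positivity)
      _ = (n - k) * (∑ i, x i) * ((n : ℝ) ^ k * (univ.val.map x).esymm k) := by ring
      _ ≤ (n - k) * (∑ i, x i) * (n.choose k * (∑ i, x i) ^ k) := by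
          have hnk : (0 : ℝ) ≤ n - k := by rw [sub_nonneg]; exact_mod_cast hkn.le
          gcongr
      _ = (k + 1) * (n.choose (k + 1) * (∑ i, x i) ^ (k + 1)) := by
          linear_combination (∑ i, x i) ^ (k + 1) * hchoose

theorem esymm_le_choose_mul_mean_pow (hx : ∀ i, 0 ≤ x i) (hα : 0 < Fintype.card α) (k : ℕ) :
    (univ.val.map x).esymm k ≤ (Fintype.card α).choose k * ((∑ i, x i) / Fintype.card α) ^ k := by
  rw [div_pow, ← mul_div_assoc, le_div_iff₀ (by positivity), mul_comm]
  exact card_pow_mul_esymm_le hx k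

end Maclaurin

theorem sum_gram_det_le_general (N : ℕ) (hN : 0 < N)
    (v : Fin N → (Fin N → ℝ)) (h : Fin N → ℝ) (hh : ∀ j, 0 ≤ h j)
    (k : ℕ) :
    ∑ S ∈ Finset.powersetCard k (Finset.univ : Finset (Fin N)),
        Real.sqrt
          (Matrix.det (Matrix.of fun i l : {x // x ∈ S} =>
            ∑ j, ((Matrix.diagonal h).mulVec (v i)) j *
              ((Matrix.diagonal h).mulVec (v l)) j)) ≤
      (Finset.univ.sup' (Finset.univ_nonempty_iff.mpr ⟨⟨0, hN⟩⟩) h) ^ k *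
        (N.choose k : ℝ) * ((∑ i, euclNorm (v i)) / N) ^ k := by
  set M := Finset.univ.sup' (Finset.univ_nonempty_iff.mpr ⟨⟨0, hN⟩⟩) h
  have hhM : ∀ j, |h j| ≤ M := fun j => (abs_of_nonneg (hh j)).trans_le (le_sup' h (mem_univ j))
  have hM0 : 0 ≤ M := (abs_nonneg _).trans (hhM ⟨0, hN⟩)
  have hmaclaurin := esymm_le_choose_mul_mean_pow (x := fun i => euclNorm (v i))
    (fun i => Real.sqrt_nonneg _) (by simpa using hN) k
  rw [esymm_map_val, Fintype.card_fin] at hmaclaurin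
  calc _ ≤ ∑ S ∈ powersetCard k (univ : Finset (Fin N)), M ^ k * ∏ i ∈ S, euclNorm (v i) := by
        refine sum_le_sum fun S hS => ?_
        rw [← mem_powersetCard_univ.1 hS]
        exact sqrt_det_gram_diagonal_mulVec_le hM0 hhM v S
    _ ≤ M ^ k * (N.choose k * ((∑ i, euclNorm (v i)) / N) ^ k) := by
        rw [← mul_sum]
        gcongr
    _ = _ := by ring

/-- For basis vectors `v_1, …, v_N` in `ℝ^N`, nonnegative fading gains `h`, `H = diag(h)`,
`1 ≤ k ≤ N` and `W` the mean of the norms of the `v_i`, the total faded parallelotope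
volume over all `k`-element subsets is at most `(max_j h_j)^k · C(N,k) · W^k`. -/
theorem sum_gram_det_le (N : ℕ) (hN : 0 < N)
    (v : Fin N → (Fin N → ℝ)) (h : Fin N → ℝ) (hh : ∀ j, 0 ≤ h j)
    (k : ℕ) (hk1 : 1 ≤ k) (hkN : k ≤ N) :
    ∑ S ∈ Finset.powersetCard k (Finset.univ : Finset (Fin N)),
        Real.sqrt
          (Matrix.det (Matrix.of fun i l : {x // x ∈ S} =>
            ∑ j, ((Matrix.diagonal h).mulVec (v i)) j *
              ((Matrix.diagonal h).mulVec (v l)) j)) ≤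
      (Finset.univ.sup' (Finset.univ_nonempty_iff.mpr ⟨⟨0, hN⟩⟩) h) ^ k *
        (N.choose k : ℝ) * ((∑ i, euclNorm (v i)) / N) ^ k :=
  sum_gram_det_le_general N hN v h hh k
end
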